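/- Let d ≥ 2 be an integer, n : ℕ, and 0 ≤ k ≤ n. Then the n-copy partial transpose of A_k satisfies (A_k)^Γ = 2^{−n} • Σ_{l=0}^{n} Q l k • T_l, where the real coefficients Q l k are regarded as complex scalars. -/

import Mathlib

open Matrix Finset
open scoped BigOperators Kronecker ComplexOrder

noncomputable section

/-- The flip (swap) operator on `ℂ^d ⊗ ℂ^d`. -/
def Flip (d : ℕ) : Matrix (Fin d × Fin d) (Fin d × Fin d) ℂ :=
  Matrix.of fun p q => if p.1 = q.2 ∧ p.2 = q.1 then 1 else 0

/-- Projection onto the symmetric subspace, `Π_s = (1 + F)/2`. -/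
def projSym (d : ℕ) : Matrix (Fin d × Fin d) (Fin d × Fin d) ℂ :=
  (2 : ℂ)⁻¹ • (1 + Flip d)

/-- Projection onto the antisymmetric subspace, `Π_a = (1 - F)/2`. -/
def projAsym (d : ℕ) : Matrix (Fin d × Fin d) (Fin d × Fin d) ℂ :=
  (2 : ℂ)⁻¹ • (1 - Flip d)

/-- The symmetric Werner state `σ_d = (2/(d(d+1))) • Π_s`. -/
def wernerSym (d : ℕ) : Matrix (Fin d × Fin d) (Fin d × Fin d) ℂ :=
  (2 / ((d : ℂ) * ((d : ℂ) + 1))) • projSym d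

/-- The antisymmetric Werner state `α_d = (2/(d(d-1))) • Π_a`. -/
def wernerAsym (d : ℕ) : Matrix (Fin d × Fin d) (Fin d × Fin d) ℂ :=
  (2 / ((d : ℂ) * ((d : ℂ) - 1))) • projAsym d

/-- The POVM element `G_d`: diagonal, with `(i,j),(i,j)` entry `1` iff `i ≠ j`. -/
def Gmat (d : ℕ) : Matrix (Fin d × Fin d) (Fin d × Fin d) ℂ :=
  Matrix.diagonal fun p => if p.1 ≠ p.2 then 1 else 0

/-- `n`-fold tensor power of a matrix on `ℂ^d ⊗ ℂ^d`. -/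
def tpow {d : ℕ} (n : ℕ) (X : Matrix (Fin d × Fin d) (Fin d × Fin d) ℂ) :
    Matrix (Fin n → Fin d × Fin d) (Fin n → Fin d × Fin d) ℂ :=
  Matrix.of fun f g => ∏ m, X (f m) (g m)

/-- The twirled single-copy POVM element `M_d = ((d-1)/(d+1)) • Π_s + Π_a`. -/
def MdMat (d : ℕ) : Matrix (Fin d × Fin d) (Fin d × Fin d) ℂ :=
  (((d : ℂ) - 1) / ((d : ℂ) + 1)) • projSym d + projAsym d

/-- `A_k`: sum over all `k`-element subsets `S` of the copies of the tensor product with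
`Π_a` on copies in `S` and `Π_s` elsewhere. -/
def Amat (d n k : ℕ) : Matrix (Fin n → Fin d × Fin d) (Fin n → Fin d × Fin d) ℂ :=
  ∑ S ∈ Finset.powersetCard k (Finset.univ : Finset (Fin n)),
    Matrix.of fun f g => ∏ m, (if m ∈ S then projAsym d else projSym d) (f m) (g m)

/-- Partial transpose on `ℂ^d ⊗ ℂ^d`. -/
def pt {d : ℕ} (X : Matrix (Fin d × Fin d) (Fin d × Fin d) ℂ) :
    Matrix (Fin d × Fin d) (Fin d × Fin d) ℂ :=
  Matrix.of fun p q => X (p.1, q.2) (q.1, p.2)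

/-- The maximally entangled state `Φ_d`. -/
def Phi (d : ℕ) : Matrix (Fin d × Fin d) (Fin d × Fin d) ℂ :=
  Matrix.of fun p q => if p.1 = p.2 ∧ q.1 = q.2 then ((d : ℂ))⁻¹ else 0

/-- `n`-copy partial transpose. -/
def ptN {d n : ℕ} (Y : Matrix (Fin n → Fin d × Fin d) (Fin n → Fin d × Fin d) ℂ) :
    Matrix (Fin n → Fin d × Fin d) (Fin n → Fin d × Fin d) ℂ :=
  Matrix.of fun f g => Y (fun m => ((f m).1, (g m).2)) (fun m => ((g m).1, (f m).2))

/-- `T_l`: sum over all `l`-element subsets `S` of the copies of the tensor product with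
`Φ_d` on copies in `S` and `1 - Φ_d` elsewhere. -/
def Tmat (d n l : ℕ) : Matrix (Fin n → Fin d × Fin d) (Fin n → Fin d × Fin d) ℂ :=
  ∑ S ∈ Finset.powersetCard l (Finset.univ : Finset (Fin n)),
    Matrix.of fun f g => ∏ m, (if m ∈ S then Phi d else (1 - Phi d)) (f m) (g m)

/-- The matrix `Q` of the linear program: `Q l k = Σ_{j=0}^{min(l,k)}
(n−l choose k−j)(l choose j)(1−d)^j (1+d)^{l−j}`. -/
def Qmat (n : ℕ) (d : ℝ) (l k : ℕ) : ℝ :=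
  ∑ j ∈ Finset.range (min l k + 1),
    ((n - l).choose (k - j) : ℝ) * (l.choose j : ℝ) * (1 - d) ^ j * (1 + d) ^ (l - j)

/-- A PPT POVM element on the `n`-copy space: `E`, `1 - E`, `E^Γ`, `(1-E)^Γ` all PSD. -/
def IsPPTPovmElem {d n : ℕ}
    (E : Matrix (Fin n → Fin d × Fin d) (Fin n → Fin d × Fin d) ℂ) : Prop :=
  E.PosSemidef ∧ (1 - E).PosSemidef ∧ (ptN E).PosSemidef ∧ (ptN (1 - E)).PosSemidef

/-- Error probability for discriminating `σ_d^{⊗n}` (prior `p`) from `α_d^{⊗n}`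
(prior `1-p`) with the two-outcome POVM `{E, 1 - E}`. -/
def errProb (d n : ℕ) (p : ℝ)
    (E : Matrix (Fin n → Fin d × Fin d) (Fin n → Fin d × Fin d) ℂ) : ℝ :=
  ((p : ℂ) * (E * tpow n (wernerSym d)).trace
    + (1 - (p : ℂ)) * ((1 - E) * tpow n (wernerAsym d)).trace).re

/-- Separability of a bipartite matrix. -/
def IsSep {I J : Type*} [Fintype I] [Fintype J]
    (W : Matrix (I × J) (I × J) ℂ) : Prop :=
  ∃ (m : ℕ) (A : Fin m → Matrix I I ℂ) (B : Fin m → Matrix J J ℂ),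
    (∀ i, (A i).PosSemidef) ∧ (∀ i, (B i).PosSemidef) ∧ W = ∑ i, A i ⊗ₖ B i

/-- Square root of a positive semidefinite matrix (as defined in the older Mathlib). -/
def Matrix.PosSemidef.sqrt {n 𝕜 : Type*} [Fintype n] [RCLike 𝕜] [DecidableEq n]
    {A : Matrix n n 𝕜} (hA : A.PosSemidef) : Matrix n n 𝕜 :=
  hA.1.eigenvectorUnitary.1 * diagonal ((↑) ∘ Real.sqrt ∘ hA.1.eigenvalues) *
  (star hA.1.eigenvectorUnitary : Matrix n n 𝕜)

/-- Trace norm `‖X‖₁ = Tr √(Xᴴ X)`. -/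
def traceNorm {ι : Type*} [Fintype ι] [DecidableEq ι] (X : Matrix ι ι ℂ) : ℝ :=
  ((Matrix.posSemidef_conjTranspose_mul_self X).sqrt).trace.re

/-- Frobenius (Hilbert–Schmidt) norm `‖X‖₂ = √(Tr (Xᴴ X))`. -/
def frobNorm {ι : Type*} [Fintype ι] (X : Matrix ι ι ℂ) : ℝ :=
  Real.sqrt ((Xᴴ * X).trace.re)

/-! Partial transposition sends the flip `F` to `d • Φ_d` and fixes `1`, so with `1 = Φ_d + (1 - Φ_d)`
we get `Π_a^Γ = ((1 - d) Φ_d + (1 - Φ_d)) / 2` and `Π_s^Γ = ((1 + d) Φ_d + (1 - Φ_d)) / 2`. Since the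
`n`-copy partial transpose acts copy by copy, expanding the tensor products writes `(A_k)^Γ` as
`2^{-n}` times a combination of the products `Φ_d^{⊗T} ⊗ (1 - Φ_d)^{⊗Tᶜ}`. The coefficient of such a
product is `∑_{|S| = k} (1 - d)^{|T ∩ S|} (1 + d)^{|T \ S|}`, which depends on `T` only through `|T|`:
counting the `S` with `|T ∩ S| = j` gives `Q |T| k`. -/

namespace Finset

variable {α : Type*} [Fintype α] [DecidableEq α]

theorem card_filter_powersetCard_card_inter_eq (T : Finset α) {j k : ℕ} (hjk : j ≤ k) :
    #{S ∈ powersetCard k univ | #(T ∩ S) = j} = (#T).choose j * (#Tᶜ).choose (k - j) := by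
  have hsplit : ∀ {A B : Finset α}, A ⊆ T → B ⊆ Tᶜ → T ∩ (A ∪ B) = A ∧ (A ∪ B) \ T = B := by
    intro A B hA hB
    have hTB : Disjoint T B := disjoint_of_subset_right hB disjoint_compl_right
    constructor <;> ext a <;> grind [disjoint_left]
  rw [← card_powersetCard, ← card_powersetCard, ← card_product]
  refine card_nbij' (fun S => (T ∩ S, S \ T)) (fun p => p.1 ∪ p.2) ?_ ?_ ?_ ?_
  · intro S hS
    simp only [coe_filter, mem_powersetCard, subset_univ, true_and, Set.mem_ofPred_eq] at hS
    have := card_inter_add_card_sdiff S T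
    simp only [coe_product, Set.mem_prod, mem_coe, mem_powersetCard]
    refine ⟨⟨inter_subset_left, hS.2⟩, fun a ha => ?_, ?_⟩
    · simpa using (mem_sdiff.1 ha).2
    · rw [inter_comm] at hS; omega
  · rintro ⟨A, B⟩ hAB
    simp only [coe_product, Set.mem_prod, mem_coe, mem_powersetCard] at hAB
    obtain ⟨⟨hAT, hA⟩, hBT, hB⟩ := hAB
    have hdisj : Disjoint A B := disjoint_left.2 fun a ha hb => mem_compl.1 (hBT hb) (hAT ha)
    simp only [coe_filter, mem_powersetCard, subset_univ, true_and, Set.mem_ofPred_eq,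
      card_union_of_disjoint hdisj, (hsplit hAT hBT).1]
    omega
  · intro S _
    show T ∩ S ∪ S \ T = S
    rw [inter_comm T S, union_comm, sdiff_union_inter]
  · rintro ⟨A, B⟩ hAB
    simp only [coe_product, Set.mem_prod, mem_coe, mem_powersetCard] at hAB
    simp only [hsplit hAB.1.1 hAB.2.1]

theorem sum_powersetCard_comp_card_inter {M : Type*} [AddCommMonoid M] (T : Finset α) (k : ℕ)
    (g : ℕ → M) :
    ∑ S ∈ powersetCard k univ, g #(T ∩ S)
      = ∑ j ∈ range (k + 1), ((#T).choose j * (#Tᶜ).choose (k - j)) • g j := by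
  have hmaps : ∀ S ∈ powersetCard k univ, #(T ∩ S) ∈ range (k + 1) := fun S hS =>
    mem_range_succ_iff.2 ((card_le_card inter_subset_right).trans (mem_powersetCard.1 hS).2.le)
  rw [← sum_fiberwise_of_maps_to hmaps]
  refine sum_congr rfl fun j hj => ?_
  rw [sum_congr rfl fun S hS => congrArg g (mem_filter.1 hS).2, sum_const,
    card_filter_powersetCard_card_inter_eq T (mem_range_succ_iff.1 hj)]

theorem sum_powersetCard_pow_card_inter_mul_pow_card_sdiff {R : Type*} [CommSemiring R]
    (T : Finset α) (k : ℕ) (x y : R) :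
    ∑ S ∈ powersetCard k univ, x ^ #(T ∩ S) * y ^ #(T \ S)
      = ∑ j ∈ range (min #T k + 1),
          ((#Tᶜ).choose (k - j) : R) * (#T).choose j * x ^ j * y ^ (#T - j) := by
  have hsdiff : ∀ S : Finset α, #(T \ S) = #T - #(T ∩ S) := fun S => by
    have := card_inter_add_card_sdiff T S; omega
  simp only [hsdiff]
  rw [sum_powersetCard_comp_card_inter T k (fun j => x ^ j * y ^ (#T - j)),
    ← sum_subset (range_subset_range.2 (by omega : min #T k + 1 ≤ k + 1))]
  · refine sum_congr rfl fun j _ => ?_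
    rw [nsmul_eq_mul]; push_cast; ring
  · intro j hjk hj
    rw [mem_range] at hjk hj
    rw [Nat.choose_eq_zero_of_lt (by omega : #T < j)]
    simp

end Finset

section PiTensor

variable {ι κ R : Type*} [Fintype ι] [CommSemiring R]

def piTensor (X : ι → Matrix κ κ R) : Matrix (ι → κ) (ι → κ) R :=
  Matrix.of fun f g => ∏ m, X m (f m) (g m)

theorem piTensor_smul (c : R) (X : ι → Matrix κ κ R) :
    piTensor (fun m => c • X m) = c ^ Fintype.card ι • piTensor X := by
  ext f g
  simp [piTensor, prod_mul_distrib]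

theorem piTensor_smul_add [DecidableEq ι] (c : ι → R) (P Q : Matrix κ κ R) :
    piTensor (fun m => c m • P + Q)
      = ∑ T ∈ univ.powerset, (∏ m ∈ T, c m) • piTensor fun m => if m ∈ T then P else Q := by
  ext f g
  simp only [piTensor, of_apply, Matrix.add_apply, Matrix.smul_apply, smul_eq_mul,
    Matrix.sum_apply, prod_add, prod_mul_distrib, mul_assoc]
  refine sum_congr rfl fun T _ => ?_
  rw [← prod_mul_prod_compl T, compl_eq_univ_sdiff]
  congr 2 <;> refine prod_congr rfl fun m hm => ?_ <;> simp_all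

end PiTensor

section PartialTranspose

variable {d n : ℕ}

theorem pt_one : pt (1 : Matrix (Fin d × Fin d) (Fin d × Fin d) ℂ) = 1 := by
  ext ⟨p₁, p₂⟩ ⟨q₁, q₂⟩
  simp only [pt, of_apply, one_apply, Prod.mk.injEq]
  grind

theorem pt_flip : pt (Flip d) = (d : ℂ) • Phi d := by
  ext ⟨p₁, p₂⟩ ⟨q₁, q₂⟩
  -- `Φ_d` has entries `d⁻¹`, junk at `d = 0`; but an index `p₁ : Fin d` forces `d ≠ 0`
  have hd : (d : ℂ) ≠ 0 := Nat.cast_ne_zero.2 p₁.pos.ne'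
  by_cases h₁ : p₁ = p₂ <;> by_cases h₂ : q₁ = q₂ <;>
    simp [pt, Flip, Phi, h₁, h₂, eq_comm, hd]

theorem pt_projSym : pt (projSym d) = (2 : ℂ)⁻¹ • ((1 + d : ℂ) • Phi d + (1 - Phi d)) := by
  have : pt (projSym d) = (2 : ℂ)⁻¹ • (pt 1 + pt (Flip d)) := rfl
  rw [this, pt_one, pt_flip]
  module

theorem pt_projAsym : pt (projAsym d) = (2 : ℂ)⁻¹ • ((1 - d : ℂ) • Phi d + (1 - Phi d)) := by
  have : pt (projAsym d) = (2 : ℂ)⁻¹ • (pt 1 - pt (Flip d)) := rfl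
  rw [this, pt_one, pt_flip]
  module

theorem ptN_piTensor (X : Fin n → Matrix (Fin d × Fin d) (Fin d × Fin d) ℂ) :
    ptN (piTensor X) = piTensor fun m => pt (X m) :=
  rfl

theorem ptN_sum {β : Type*} (s : Finset β)
    (Y : β → Matrix (Fin n → Fin d × Fin d) (Fin n → Fin d × Fin d) ℂ) :
    ptN (∑ b ∈ s, Y b) = ∑ b ∈ s, ptN (Y b) := by
  ext f g
  simp [ptN, Matrix.sum_apply]

end PartialTranspose

section Werner

variable {d n : ℕ}

theorem Amat_eq_sum_piTensor (k : ℕ) :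
    Amat d n k = ∑ S ∈ powersetCard k univ,
      piTensor fun m => if m ∈ S then projAsym d else projSym d :=
  rfl

theorem Tmat_eq_sum_piTensor (l : ℕ) :
    Tmat d n l = ∑ T ∈ powersetCard l univ, piTensor fun m => if m ∈ T then Phi d else 1 - Phi d :=
  rfl

theorem ptN_piTensor_projAsym_projSym (S : Finset (Fin n)) :
    ptN (piTensor fun m => if m ∈ S then projAsym d else projSym d)
      = ((2 : ℂ) ^ n)⁻¹ • ∑ T ∈ univ.powerset, ((1 - d : ℂ) ^ #(T ∩ S) * (1 + d) ^ #(T \ S)) •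
          piTensor fun m => if m ∈ T then Phi d else 1 - Phi d := by
  have hcopy : ∀ m, pt (if m ∈ S then projAsym d else projSym d)
      = (2 : ℂ)⁻¹ • ((if m ∈ S then 1 - d else 1 + d : ℂ) • Phi d + (1 - Phi d)) := fun m => by
    split_ifs
    exacts [pt_projAsym, pt_projSym]
  have hcoeff : ∀ T : Finset (Fin n), ∏ m ∈ T, (if m ∈ S then 1 - d else 1 + d : ℂ)
      = (1 - d) ^ #(T ∩ S) * (1 + d) ^ #(T \ S) := fun T => by
    rw [prod_ite, prod_const, prod_const, filter_mem_eq_inter, ← sdiff_eq_filter]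
  simp only [ptN_piTensor, hcopy, piTensor_smul, piTensor_smul_add, Fintype.card_fin, inv_pow,
    hcoeff]

theorem sum_powersetCard_coeff_eq_Qmat (k : ℕ) (T : Finset (Fin n)) :
    ∑ S ∈ powersetCard k univ, (1 - d : ℂ) ^ #(T ∩ S) * (1 + d) ^ #(T \ S)
      = (Qmat n d #T k : ℂ) := by
  rw [sum_powersetCard_pow_card_inter_mul_pow_card_sdiff, card_compl, Fintype.card_fin]
  push_cast [Qmat]
  rfl

end Werner

theorem ptN_Amat_general (d : ℕ) (n k : ℕ) :
    ptN (Amat d n k)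
      = ((2 : ℂ) ^ n)⁻¹ •
          ∑ l ∈ Finset.range (n + 1), ((Qmat n (d : ℝ) l k : ℝ) : ℂ) • Tmat d n l := by
  calc ptN (Amat d n k)
      = ((2 : ℂ) ^ n)⁻¹ • ∑ T ∈ univ.powerset, (Qmat n d #T k : ℂ) •
          piTensor fun m => if m ∈ T then Phi d else 1 - Phi d := by
        simp only [Amat_eq_sum_piTensor, ptN_sum, ptN_piTensor_projAsym_projSym, ← smul_sum]
        rw [sum_comm]
        simp only [← sum_smul, sum_powersetCard_coeff_eq_Qmat]
    _ = _ := by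
        rw [sum_powerset, card_univ, Fintype.card_fin]
        simp only [Tmat_eq_sum_piTensor, smul_sum]
        exact sum_congr rfl fun l _ => sum_congr rfl fun T hT => by
          rw [(mem_powersetCard.1 hT).2]

/-- `(A_k)^Γ = 2^{−n} • Σ_{l=0}^{n} Q l k • T_l`. -/
theorem ptN_Amat (d : ℕ) (hd : 2 ≤ d) (n k : ℕ) (hk : k ≤ n) :
    ptN (Amat d n k)
      = ((2 : ℂ) ^ n)⁻¹ •
          ∑ l ∈ Finset.range (n + 1), ((Qmat n (d : ℝ) l k : ℝ) : ℂ) • Tmat d n l :=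
  ptN_Amat_general d n k
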